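/- arXiv:1006.0702 — 2 statements merged into one kernel-verified Lean document; each statement's English description precedes it below -/
import Mathlib

section
/- Let λ be a linear automorphism of a finite-dimensional complex vector space V with λ^l = Id for some positive integer l. For any x ∈ V, the vector y = (1/l)·Σ_{i=1}^{l} i·λ^i(x) satisfies (λ - 1)x = (λ^{-1} - 1)y + (λ - 1)y. -/
private lemma tel_aux (V : Type*) [AddCommGroup V] [Module ℂ V]
    (e : V ≃ₗ[ℂ] V) (x : V) (l : ℕ) :
    ∑ j ∈ Finset.range l, ((j:ℂ)+1) • ((e ^ (j+2)) x - (2:ℂ) • ((e ^ (j+1)) x) + (e ^ j) x)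
    = (l:ℂ) • (e ^ (l+1)) x - ((l:ℂ)+1) • (e ^ l) x + x := by
  induction l with
  | zero => simp
  | succ n ih =>
      rw [Finset.sum_range_succ, ih]
      push_cast
      have h2 : n + 1 + 1 = n + 2 := rfl
      rw [h2]
      module

/-- Let `e` be a linear automorphism of a finite-dimensional complex vector
space `V` with `e ^ l = 1` for some positive integer `l`. For any `x ∈ V`, the vector
`y = (1/l) • ∑_{i=1}^{l} i • e^i x` satisfies `(e - 1) x = (e⁻¹ - 1) y + (e - 1) y`. -/
theorem averaging_solution
    (V : Type*) [AddCommGroup V] [Module ℂ V] [FiniteDimensional ℂ V]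
    (l : ℕ) (hl : 0 < l) (e : V ≃ₗ[ℂ] V) (he : e ^ l = 1)
    (x y : V)
    (hy : y = ((l : ℂ))⁻¹ • ∑ i ∈ Finset.Icc 1 l, (i : ℂ) • (e ^ i) x) :
    e x - x = (e⁻¹ y - y) + (e y - y) := by
  have hl0 : (l : ℂ) ≠ 0 := by exact_mod_cast hl.ne'
  -- reindex the sum
  have hS : ∑ i ∈ Finset.Icc 1 l, (i : ℂ) • (e ^ i) x
      = ∑ j ∈ Finset.range l, ((j:ℂ)+1) • (e ^ (j+1)) x := by
    rw [← Finset.Ico_add_one_right_eq_Icc, Finset.sum_Ico_eq_sum_range]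
    refine Finset.sum_congr (by norm_num) fun j _ => ?_
    rw [add_comm 1 j]
    push_cast
    ring_nf
  rw [hS] at hy
  set c : ℂ := ((l : ℂ))⁻¹ with hc
  set T0 : V := ∑ j ∈ Finset.range l, ((j:ℂ)+1) • (e ^ (j+1)) x with hT0
  set T1 : V := ∑ j ∈ Finset.range l, ((j:ℂ)+1) • (e ^ j) x with hT1
  set T2 : V := ∑ j ∈ Finset.range l, ((j:ℂ)+1) • (e ^ (j+2)) x with hT2
  have hkeyinv : ∀ j : ℕ, (e⁻¹) ((e ^ (j+1)) x) = (e ^ j) x := by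
    intro j
    have h : e⁻¹ * e ^ (j+1) = e ^ j := by
      rw [pow_succ', ← mul_assoc, inv_mul_cancel, one_mul]
    have := congrArg (fun f : V ≃ₗ[ℂ] V => f x) h
    simpa using this
  have hkey : ∀ j : ℕ, e ((e ^ (j+1)) x) = (e ^ (j+2)) x := by
    intro j
    have h : e * e ^ (j+1) = e ^ (j+2) := by
      rw [← pow_succ']
    have := congrArg (fun f : V ≃ₗ[ℂ] V => f x) h
    simpa using this
  have hy1 : e⁻¹ y = c • T1 := by
    rw [hy, map_smul, hT0, map_sum]
    congr 1
    exact Finset.sum_congr rfl fun j _ => by rw [map_smul, hkeyinv j]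
  have hy2 : e y = c • T2 := by
    rw [hy, map_smul, hT0, map_sum]
    congr 1
    exact Finset.sum_congr rfl fun j _ => by rw [map_smul, hkey j]
  have htel : T2 - (2:ℂ) • T0 + T1 = (l:ℂ) • e x - (l:ℂ) • x := by
    have h := tel_aux V e x l
    rw [show e ^ (l+1) = e from by rw [pow_succ, he, one_mul], he] at h
    have hsplit : ∑ j ∈ Finset.range l,
        ((j:ℂ)+1) • ((e ^ (j+2)) x - (2:ℂ) • ((e ^ (j+1)) x) + (e ^ j) x)
        = T2 - (2:ℂ) • T0 + T1 := by
      rw [hT0, hT1, hT2, Finset.smul_sum, ← Finset.sum_sub_distrib, ← Finset.sum_add_distrib]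
      exact Finset.sum_congr rfl fun j _ => by module
    rw [hsplit] at h
    rw [h]
    simp only [LinearEquiv.coe_one, id_eq]
    module
  rw [hy1, hy2, hy]
  have hcomb : c • T1 - c • T0 + (c • T2 - c • T0) = c • (T2 - (2:ℂ) • T0 + T1) := by
    module
  rw [hcomb, htel, smul_sub, smul_smul, smul_smul, hc, inv_mul_cancel₀ hl0, one_smul, one_smul]
end

section
/- Let φ(u,z) = θ(u+z)θ'(0)/(θ(u)θ(z)) with θ the odd Jacobi theta function, Im τ > 0. Then the Fay trisecant identity holds: φ(u₁,z₁)φ(u₂,z₂) − φ(u₁+u₂, z₁)φ(u₂, z₂−z₁) − φ(u₁+u₂, z₂)φ(u₁, z₁−z₂) = 0, for all u₁, u₂, z₁, z₂ for which all terms are defined. -/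
open Complex

/-- The odd Jacobi theta function
`θ(z|τ) = q^{1/8} ∑_{n∈ℤ} (−1)^n e^{πi(n(n+1)τ + 2nz)}` with `q = e^{2πiτ}`. -/
noncomputable def jTheta (τ z : ℂ) : ℂ :=
  Complex.exp ((Real.pi : ℂ) * I * τ / 4) *
    ∑' n : ℤ, (-1 : ℂ) ^ n *
      Complex.exp ((Real.pi : ℂ) * I * ((n : ℂ) * ((n : ℂ) + 1) * τ + 2 * (n : ℂ) * z))

/-- The Kronecker elliptic function `φ(u,z) = θ(u+z)θ'(0)/(θ(u)θ(z))`. -/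
noncomputable def kron (τ u z : ℂ) : ℂ :=
  jTheta τ (u + z) * deriv (jTheta τ) 0 / (jTheta τ u * jTheta τ z)

noncomputable def thT (τ z : ℂ) (n : ℤ) : ℂ :=
  cexp ((Real.pi : ℂ) * I * (((n : ℂ) + 1/2)^2 * τ + (2 * (n : ℂ) + 1) * z + (n : ℂ)))

noncomputable def th (τ z : ℂ) : ℂ := ∑' n : ℤ, thT τ z n

noncomputable def ppT (τ x : ℂ) (m : ℤ) : ℂ :=
  cexp ((Real.pi : ℂ) * I * (2 * (m : ℂ)^2 * τ + 4 * (m : ℂ) * x))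

noncomputable def ppF (τ x : ℂ) : ℂ := ∑' m : ℤ, ppT τ x m

noncomputable def rrT (τ x : ℂ) (m : ℤ) : ℂ :=
  cexp ((Real.pi : ℂ) * I * ((2 * (m : ℂ) + 1)^2 / 2 * τ + 2 * (2 * (m : ℂ) + 1) * x))

noncomputable def rrF (τ x : ℂ) : ℂ := ∑' m : ℤ, rrT τ x m

lemma summable_norm_jt (w τ : ℂ) (hτ : 0 < τ.im) :
    Summable fun n : ℤ => ‖jacobiTheta₂_term n w τ‖ := by
  refine (summable_pow_mul_jacobiTheta₂_term_bound |w.im| hτ 0).of_nonneg_of_le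
    (fun n => norm_nonneg _) (fun n => ?_)
  simpa using norm_jacobiTheta₂_term_le hτ le_rfl le_rfl n

lemma thT_eq (τ z : ℂ) (n : ℤ) :
    thT τ z n = cexp ((Real.pi : ℂ) * I * (τ/4 + z)) * jacobiTheta₂_term n (z + (τ+1)/2) τ := by
  rw [thT, jacobiTheta₂_term, ← Complex.exp_add]; congr 1; push_cast; ring

lemma ppT_eq (τ x : ℂ) (m : ℤ) : ppT τ x m = jacobiTheta₂_term m (2*x) (2*τ) := by
  rw [ppT, jacobiTheta₂_term]; congr 1; push_cast; ring

lemma rrT_eq (τ x : ℂ) (m : ℤ) :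
    rrT τ x m = cexp ((Real.pi : ℂ) * I * (τ/2 + 2*x)) * jacobiTheta₂_term m (2*x + τ) (2*τ) := by
  rw [rrT, jacobiTheta₂_term, ← Complex.exp_add]; congr 1; push_cast; ring

lemma summable_norm_thT (τ z : ℂ) (hτ : 0 < τ.im) : Summable fun n : ℤ => ‖thT τ z n‖ := by
  simp_rw [thT_eq, norm_mul]
  exact (summable_norm_jt _ _ hτ).mul_left _

lemma im2 (τ : ℂ) (hτ : 0 < τ.im) : 0 < (2*τ).im := by simp [Complex.mul_im]; linarith

lemma summable_norm_ppT (τ x : ℂ) (hτ : 0 < τ.im) : Summable fun m : ℤ => ‖ppT τ x m‖ := by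
  simp_rw [ppT_eq]
  exact summable_norm_jt _ _ (im2 τ hτ)

lemma summable_norm_rrT (τ x : ℂ) (hτ : 0 < τ.im) : Summable fun m : ℤ => ‖rrT τ x m‖ := by
  simp_rw [rrT_eq, norm_mul]
  exact (summable_norm_jt _ _ (im2 τ hτ)).mul_left _

lemma th_odd (τ z : ℂ) : th τ (-z) = - th τ z := by
  have h1 : ∀ n : ℤ, thT τ (-z) (-1 - n) = - thT τ z n := by
    intro n
    have h2 : thT τ (-z) (-1 - n) = cexp (-(n : ℂ) * (2 * (Real.pi : ℂ) * I)) *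
        (cexp (-((Real.pi : ℂ) * I)) * thT τ z n) := by
      rw [thT, thT, ← Complex.exp_add, ← Complex.exp_add]
      congr 1
      show ((Real.pi : ℂ) * I * ((((-1 - n : ℤ) : ℂ) + 1/2)^2 * τ +
        (2 * ((-1 - n : ℤ) : ℂ) + 1) * (-z) + ((-1 - n : ℤ) : ℂ))) = _
      push_cast
      ring
    rw [h2]
    rw [show (-(n : ℂ)) * (2 * (Real.pi : ℂ) * I) = ((-n : ℤ) : ℂ) * (2 * (Real.pi : ℂ) * I) by push_cast; ring]
    rw [Complex.exp_int_mul_two_pi_mul_I, Complex.exp_neg, Complex.exp_pi_mul_I]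
    norm_num
  have he := Equiv.tsum_eq (α := ℂ)
    (⟨fun n => -1 - n, fun n => -1 - n, fun n => by simp, fun n => by simp⟩ : ℤ ≃ ℤ)
    (thT τ (-z))
  simp only [Equiv.coe_fn_mk] at he
  calc th τ (-z) = ∑' n : ℤ, thT τ (-z) (-1 - n) := he.symm
    _ = ∑' n : ℤ, - thT τ z n := tsum_congr h1
    _ = - th τ z := by rw [tsum_neg, th]

lemma exp_eq_exp_of (a b : ℂ) (k : ℤ) (h : a = b + k * (2 * (Real.pi : ℂ) * I)) :
    cexp a = cexp b := by
  rw [h, Complex.exp_add, Complex.exp_int_mul_two_pi_mul_I, mul_one]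

lemma prodP (τ : ℂ) (hτ : 0 < τ.im) (x y : ℂ) :
    th τ (x + y) * th τ (x - y) = rrF τ x * ppF τ y - ppF τ x * rrF τ y := by
  have sA := summable_norm_thT τ (x + y) hτ
  have sB := summable_norm_thT τ (x - y) hτ
  have spx := summable_norm_ppT τ x hτ
  have spy := summable_norm_ppT τ y hτ
  have srx := summable_norm_rrT τ x hτ
  have sry := summable_norm_rrT τ y hτ
  set H : ℤ × ℤ → ℂ := fun mn => thT τ (x + y) mn.1 * thT τ (x - y) mn.2 with hH
  have hprod : th τ (x + y) * th τ (x - y) = ∑' mn : ℤ × ℤ, H mn :=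
    tsum_mul_tsum_of_summable_norm sA sB
  have hs1 : HasSum (fun ab : ℤ × ℤ => rrT τ x ab.1 * ppT τ y ab.2) (rrF τ x * ppF τ y) := by
    have h := (summable_mul_of_summable_norm srx spy).hasSum
    rwa [← tsum_mul_tsum_of_summable_norm srx spy] at h
  have hs2 : HasSum (fun ab : ℤ × ℤ => ppT τ x ab.1 * rrT τ y ab.2) (ppF τ x * rrF τ y) := by
    have h := (summable_mul_of_summable_norm spx sry).hasSum
    rwa [← tsum_mul_tsum_of_summable_norm spx sry] at h
  set i₁ : ℤ × ℤ → ℤ × ℤ := fun ab => (ab.1 + ab.2, ab.1 - ab.2) with hi₁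
  set i₂ : ℤ × ℤ → ℤ × ℤ := fun ab => (ab.1 + ab.2, ab.1 - ab.2 - 1) with hi₂
  have inj1 : Function.Injective i₁ := by
    rintro ⟨a, b⟩ ⟨c, d⟩ h
    simp only [hi₁, Prod.mk.injEq] at h ⊢
    omega
  have inj2 : Function.Injective i₂ := by
    rintro ⟨a, b⟩ ⟨c, d⟩ h
    simp only [hi₂, Prod.mk.injEq] at h ⊢
    omega
  have key1 : (H ∘ i₁) = fun ab : ℤ × ℤ => rrT τ x ab.1 * ppT τ y ab.2 := by
    funext ab
    obtain ⟨a, b⟩ := ab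
    show thT τ (x + y) (a + b) * thT τ (x - y) (a - b) = rrT τ x a * ppT τ y b
    rw [thT, thT, rrT, ppT, ← Complex.exp_add, ← Complex.exp_add]
    exact exp_eq_exp_of _ _ a (by push_cast; ring)
  have key2 : (H ∘ i₂) = fun ab : ℤ × ℤ => -(ppT τ x ab.1 * rrT τ y ab.2) := by
    funext ab
    obtain ⟨a, b⟩ := ab
    show thT τ (x + y) (a + b) * thT τ (x - y) (a - b - 1) = -(ppT τ x a * rrT τ y b)
    have lhs : thT τ (x + y) (a + b) * thT τ (x - y) (a - b - 1) =
        cexp (((Real.pi:ℂ) * I * (2 * (a:ℂ)^2 * τ + 4 * (a:ℂ) * x) +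
          (Real.pi:ℂ) * I * ((2 * (b:ℂ) + 1)^2 / 2 * τ + 2 * (2 * (b:ℂ) + 1) * y)) +
          (Real.pi:ℂ) * I) := by
      rw [thT, thT, ← Complex.exp_add]
      exact exp_eq_exp_of _ _ (a - 1) (by push_cast; ring)
    rw [lhs, Complex.exp_add, Complex.exp_pi_mul_I, ppT, rrT, ← Complex.exp_add]
    ring
  have r1 : HasSum (H ∘ ((↑) : Set.range i₁ → ℤ × ℤ)) (rrF τ x * ppF τ y) :=
    inj1.hasSum_range_iff.mpr (key1 ▸ hs1)
  have r2 : HasSum (H ∘ ((↑) : Set.range i₂ → ℤ × ℤ)) (-(ppF τ x * rrF τ y)) :=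
    inj2.hasSum_range_iff.mpr (key2 ▸ hs2.neg)
  have hcompl : IsCompl (Set.range i₁) (Set.range i₂) := by
    constructor
    · rw [Set.disjoint_left]
      rintro p ⟨⟨a, b⟩, rfl⟩ ⟨⟨c, d⟩, h⟩
      simp only [hi₁, hi₂, Prod.mk.injEq] at h
      omega
    · rw [codisjoint_iff_le_sup]
      rintro ⟨m, n⟩ -
      simp only [Set.sup_eq_union, Set.mem_union, Set.mem_range, Prod.mk.injEq, hi₁, hi₂,
        Prod.exists]
      rcases Int.even_or_odd (m - n) with ⟨c, hc⟩ | ⟨c, hc⟩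
      · exact Or.inl ⟨n + c, c, by omega, by omega⟩
      · exact Or.inr ⟨n + 1 + c, c, by omega, by omega⟩
  have hsum : HasSum H (rrF τ x * ppF τ y + -(ppF τ x * rrF τ y)) :=
    r1.add_isCompl hcompl r2
  rw [hprod, hsum.tsum_eq]; ring

lemma key4 (τ : ℂ) (hτ : 0 < τ.im) (u₁ u₂ z₁ z₂ : ℂ) :
    (th τ (u₁ + z₁) * th τ (u₂ + z₂)) * (th τ (u₁ + u₂) * th τ (z₂ - z₁))
      - (th τ (u₁ + u₂ + z₁) * th τ z₂) * (th τ u₁ * th τ (u₂ + z₂ - z₁))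
      + (th τ (u₁ + u₂ + z₂) * th τ z₁) * (th τ (u₁ + z₁ - z₂) * th τ u₂) = 0 := by
  set x : ℂ := (u₁ + u₂ + z₁ + z₂) / 2 with hx
  set y : ℂ := (u₁ - u₂ + z₁ - z₂) / 2 with hy
  set u : ℂ := (u₁ + u₂ - z₁ + z₂) / 2 with hu
  set v : ℂ := (u₁ + u₂ + z₁ - z₂) / 2 with hv
  have e1 : th τ (u₁ + z₁) * th τ (u₂ + z₂) = rrF τ x * ppF τ y - ppF τ x * rrF τ y := by
    have h := prodP τ hτ x y
    rwa [show x + y = u₁ + z₁ by rw [hx, hy]; ring,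
      show x - y = u₂ + z₂ by rw [hx, hy]; ring] at h
  have e2 : th τ (u₁ + u₂) * th τ (z₂ - z₁) = rrF τ u * ppF τ v - ppF τ u * rrF τ v := by
    have h := prodP τ hτ u v
    rwa [show u + v = u₁ + u₂ by rw [hu, hv]; ring,
      show u - v = z₂ - z₁ by rw [hu, hv]; ring] at h
  have e3 : th τ (u₁ + u₂ + z₁) * th τ z₂ = rrF τ x * ppF τ v - ppF τ x * rrF τ v := by
    have h := prodP τ hτ x v
    rwa [show x + v = u₁ + u₂ + z₁ by rw [hx, hv]; ring,
      show x - v = z₂ by rw [hx, hv]; ring] at h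
  have e4 : th τ u₁ * th τ (u₂ + z₂ - z₁) =
      -(rrF τ y * ppF τ u - ppF τ y * rrF τ u) := by
    have h := prodP τ hτ y u
    rw [show y + u = u₁ by rw [hy, hu]; ring,
      show y - u = -(u₂ + z₂ - z₁) by rw [hy, hu]; ring, th_odd] at h
    linear_combination -h
  have e5 : th τ (u₁ + u₂ + z₂) * th τ z₁ =
      -(rrF τ u * ppF τ x - ppF τ u * rrF τ x) := by
    have h := prodP τ hτ u x
    rw [show u + x = u₁ + u₂ + z₂ by rw [hu, hx]; ring,
      show u - x = -z₁ by rw [hu, hx]; ring, th_odd] at h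
    linear_combination -h
  have e6 : th τ (u₁ + z₁ - z₂) * th τ u₂ =
      -(rrF τ y * ppF τ v - ppF τ y * rrF τ v) := by
    have h := prodP τ hτ y v
    rw [show y + v = u₁ + z₁ - z₂ by rw [hy, hv]; ring,
      show y - v = -u₂ by rw [hy, hv]; ring, th_odd] at h
    linear_combination -h
  rw [e1, e2, e3, e4, e5, e6]
  ring

lemma th_jT (τ z : ℂ) : th τ z = cexp ((Real.pi : ℂ) * I * z) * jTheta τ z := by
  rw [th, jTheta, ← tsum_mul_left, ← tsum_mul_left]
  refine tsum_congr fun n => ?_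
  have hm : ((-1 : ℂ)) ^ n = cexp ((n : ℂ) * ((Real.pi : ℂ) * I)) := by
    rw [Complex.exp_int_mul, Complex.exp_pi_mul_I]
  rw [thT, hm, ← Complex.exp_add, ← Complex.exp_add, ← Complex.exp_add]
  congr 1
  push_cast
  ring

lemma kron_th (τ u z : ℂ) :
    kron τ u z = th τ (u + z) * deriv (jTheta τ) 0 / (th τ u * th τ z) := by
  have hden : th τ u * th τ z = cexp ((Real.pi : ℂ) * I * (u + z)) *
      (jTheta τ u * jTheta τ z) := by
    rw [th_jT, th_jT, mul_mul_mul_comm, ← Complex.exp_add]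
    congr 2
    ring
  rw [kron, th_jT, hden, mul_assoc, mul_div_mul_left _ _ (Complex.exp_ne_zero _)]

/-- the Fay trisecant identity
`φ(u₁,z₁)φ(u₂,z₂) − φ(u₁+u₂, z₁)φ(u₂, z₂−z₁) − φ(u₁+u₂, z₂)φ(u₁, z₁−z₂) = 0`
for all `u₁, u₂, z₁, z₂` for which all terms are defined. -/
theorem fay_trisecant_identity (τ u₁ u₂ z₁ z₂ : ℂ) (hτ : 0 < τ.im)
    (h1 : jTheta τ u₁ ≠ 0) (h2 : jTheta τ u₂ ≠ 0) (h3 : jTheta τ (u₁ + u₂) ≠ 0)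
    (h4 : jTheta τ z₁ ≠ 0) (h5 : jTheta τ z₂ ≠ 0)
    (h6 : jTheta τ (z₂ - z₁) ≠ 0) (h7 : jTheta τ (z₁ - z₂) ≠ 0) :
    kron τ u₁ z₁ * kron τ u₂ z₂ - kron τ (u₁ + u₂) z₁ * kron τ u₂ (z₂ - z₁) -
      kron τ (u₁ + u₂) z₂ * kron τ u₁ (z₁ - z₂) = 0 := by
  have tne : ∀ w : ℂ, jTheta τ w ≠ 0 → th τ w ≠ 0 := fun w hw => by
    rw [th_jT]; exact mul_ne_zero (Complex.exp_ne_zero _) hw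
  have t1 := tne _ h1
  have t2 := tne _ h2
  have t3 := tne _ h3
  have t4 := tne _ h4
  have t5 := tne _ h5
  have t6 := tne _ h6
  have t7 := tne _ h7
  have key := key4 τ hτ u₁ u₂ z₁ z₂
  rw [kron_th, kron_th, kron_th, kron_th, kron_th, kron_th,
    show u₂ + (z₂ - z₁) = u₂ + z₂ - z₁ by ring,
    show u₁ + (z₁ - z₂) = u₁ + z₁ - z₂ by ring]
  set D := deriv (jTheta τ) 0
  have hodd : th τ (z₁ - z₂) = - th τ (z₂ - z₁) := by
    rw [show z₁ - z₂ = -(z₂ - z₁) by ring, th_odd]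
  field_simp
  linear_combination D ^ 2 *
    (th τ (z₁ - z₂) * key -
      th τ z₁ * th τ u₂ * th τ (u₁ + u₂ + z₂) * th τ (u₁ + z₁ - z₂) * hodd)
end
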